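/- arXiv:2602.11292 — 2 statements merged into one kernel-verified Lean document; each statement's English description precedes it below -/
import Mathlib

section
/- Let p(z) = Σ_{k=-r}^n a_k z^k be a Laurent polynomial with complex coefficients where n, r ∈ ℕ, a_{-r} ≠ 0 and a_n ≠ 0. If all zeros of p lie on the unit circle, then there exists θ ∈ ℝ such that a_k = e^{iθ} · conj(a_{n-r-k}) for all −r ≤ k ≤ n. -/
open Polynomial Complex ComplexConjugate

/-!
Multiplying by `z ^ r` turns `p` into a polynomial `P` of degree `n + r` with `P 0 = a (-r) ≠ 0`,
whose roots are the zeros of `p`. A linear factor `z - w` with `|w| = 1` is a unimodular multiple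
of its conjugate reciprocal `1 - conj w * z`, hence so is the product `P` of such factors (times its
leading coefficient). Comparing coefficients in `P = μ P*` with `|μ| = 1` gives
`a k = μ * conj (a (n - r - k))`.
-/

noncomputable section

/-- `P*(z) = z ^ deg P * conj (P (1 / conj z))`. -/
def conjReverse (P : ℂ[X]) : ℂ[X] := (P.map (starRingEnd ℂ)).reverse

lemma conjReverse_mul (P Q : ℂ[X]) : conjReverse (P * Q) = conjReverse P * conjReverse Q := by
  simp only [conjReverse, Polynomial.map_mul, reverse_mul_of_domain]

lemma conjReverse_C (c : ℂ) : conjReverse (C c) = C (conj c) := by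
  simp [conjReverse]

lemma conjReverse_X_sub_C (z : ℂ) : conjReverse (X - C z) = 1 - C (conj z) * X := by
  rw [conjReverse, Polynomial.map_sub, map_X, map_C, sub_eq_add_neg, ← C_neg, reverse_add_C]
  have hX : (X : ℂ[X]).reverse = 1 := by
    rw [← mul_one X, reverse_X_mul, ← C_1, reverse_C]
  simp [hX, sub_eq_add_neg]

lemma coeff_conjReverse (P : ℂ[X]) {m : ℕ} (hm : m ≤ P.natDegree) :
    (conjReverse P).coeff m = conj (P.coeff (P.natDegree - m)) := by
  rw [conjReverse, coeff_reverse, natDegree_map, revAt_le hm, coeff_map]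

def IsSelfInversive (P : ℂ[X]) : Prop := ∃ μ : ℂ, ‖μ‖ = 1 ∧ P = C μ * conjReverse P

lemma IsSelfInversive.mul {P Q : ℂ[X]} (hP : IsSelfInversive P) (hQ : IsSelfInversive Q) :
    IsSelfInversive (P * Q) := by
  obtain ⟨μ, hμ, hPμ⟩ := hP
  obtain ⟨ν, hν, hQν⟩ := hQ
  refine ⟨μ * ν, by rw [norm_mul, hμ, hν, one_mul], ?_⟩
  rw [conjReverse_mul, C_mul]
  nth_rw 1 [hPμ, hQν]
  ring

lemma isSelfInversive_C {c : ℂ} (hc : c ≠ 0) : IsSelfInversive (C c) := by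
  refine ⟨c / conj c, ?_, ?_⟩
  · rw [norm_div, norm_conj, div_self (norm_ne_zero_iff.mpr hc)]
  · rw [conjReverse_C, ← C_mul, div_mul_cancel₀ _ ((_root_.map_ne_zero _).mpr hc)]

lemma isSelfInversive_X_sub_C {z : ℂ} (hz : ‖z‖ = 1) : IsSelfInversive (X - C z) := by
  have hzz : z * conj z = 1 := by
    rw [mul_conj, normSq_eq_norm_sq, hz]; norm_num
  refine ⟨-z, by rw [norm_neg, hz], ?_⟩
  rw [conjReverse_X_sub_C, mul_sub, ← mul_assoc, ← C_mul, neg_mul, hzz]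
  simp only [C_neg, C_1]
  ring

lemma isSelfInversive_of_norm_roots_eq_one {P : ℂ[X]} (hP : P ≠ 0)
    (hroots : ∀ z ∈ P.roots, ‖z‖ = 1) : IsSelfInversive P := by
  rw [(IsAlgClosed.splits P).eq_prod_roots]
  refine (isSelfInversive_C (leadingCoeff_ne_zero.mpr hP)).mul
    (Multiset.prod_induction _ _ (fun _ _ => IsSelfInversive.mul) ?_ ?_)
  · simpa using isSelfInversive_C one_ne_zero
  · simp only [Multiset.mem_map]
    rintro _ ⟨z, hz, rfl⟩
    exact isSelfInversive_X_sub_C (hroots z hz)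

lemma coeff_eq_mul_conj_coeff_natDegree_sub {P : ℂ[X]} {μ : ℂ} (h : P = C μ * conjReverse P)
    {m : ℕ} (hm : m ≤ P.natDegree) : P.coeff m = μ * conj (P.coeff (P.natDegree - m)) := by
  rw [← coeff_conjReverse P hm, ← coeff_C_mul, ← h]

section LaurentNumerator

open Finset

variable {R : Type*} [Semiring R] (a : ℤ → R) (r n : ℕ)

def laurentNumerator : R[X] := ∑ k ∈ Icc (-(r : ℤ)) n, C (a k) * X ^ (k + r).toNat

theorem coeff_laurentNumerator (m : ℕ) :
    (laurentNumerator a r n).coeff m = if m ≤ n + r then a (m - r) else 0 := by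
  have hindex : ∀ k ∈ Icc (-(r : ℤ)) n, (m = (k + r).toNat ↔ (m - r : ℤ) = k) := by
    intro k hk
    rw [mem_Icc] at hk
    omega
  simp only [laurentNumerator, finsetSum_coeff, coeff_C_mul_X_pow]
  rw [sum_congr rfl fun k hk => if_congr (hindex k hk) rfl rfl, sum_ite_eq]
  refine if_congr ?_ rfl rfl
  rw [mem_Icc]
  omega

theorem coeff_laurentNumerator_toNat {k : ℤ} (hr : -(r : ℤ) ≤ k) (hn : k ≤ n) :
    (laurentNumerator a r n).coeff (k + r).toNat = a k := by
  rw [coeff_laurentNumerator, if_pos (by omega)]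
  congr 1
  omega

theorem natDegree_laurentNumerator (han : a n ≠ 0) :
    (laurentNumerator a r n).natDegree = n + r := by
  refine natDegree_eq_of_le_of_coeff_ne_zero ?_ ?_
  · refine natDegree_le_iff_coeff_eq_zero.mpr fun m hm => ?_
    rw [coeff_laurentNumerator, if_neg (by exact_mod_cast hm.not_ge)]
  · simpa [coeff_laurentNumerator] using han

theorem eval_laurentNumerator {K : Type*} [Field K] (a : ℤ → K) {z : K} (hz : z ≠ 0) :
    (laurentNumerator a r n).eval z = z ^ r * ∑ k ∈ Icc (-(r : ℤ)) n, a k * z ^ k := by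
  rw [laurentNumerator, eval_finsetSum, mul_sum]
  refine sum_congr rfl fun k hk => ?_
  have hk : ((k + r).toNat : ℤ) = k + r := by
    rw [mem_Icc] at hk
    omega
  rw [eval_C_mul, eval_X_pow, ← zpow_natCast, hk, zpow_add₀ hz, zpow_natCast]
  ring

end LaurentNumerator

end

/-- If all zeros of the Laurent polynomial `p(z) = ∑_{k=-r}^n a_k z^k` (with `a_{-r} ≠ 0`,
`a_n ≠ 0`) lie on the unit circle, then there is `θ ∈ ℝ` with
`a_k = e^{iθ} · conj (a_{n-r-k})` for all `-r ≤ k ≤ n`. -/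
theorem laurent_zeros_on_unit_circle_coeff_symmetry
    (n r : ℕ) (a : ℤ → ℂ) (har : a (-(r : ℤ)) ≠ 0) (han : a (n : ℤ) ≠ 0)
    (hzeros : ∀ z : ℂ, z ≠ 0 →
      (∑ k ∈ Finset.Icc (-(r : ℤ)) (n : ℤ), a k * z ^ k) = 0 → ‖z‖ = 1) :
    ∃ θ : ℝ, ∀ k : ℤ, -(r : ℤ) ≤ k → k ≤ (n : ℤ) →
      a k = Complex.exp (θ * Complex.I) * (starRingEnd ℂ) (a ((n : ℤ) - (r : ℤ) - k)) := by
  set P := laurentNumerator a r n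
  have hP0 : P.coeff 0 ≠ 0 := by simpa [P, coeff_laurentNumerator] using har
  have hroots : ∀ z ∈ P.roots, ‖z‖ = 1 := by
    intro z hz
    have hPz := isRoot_of_mem_roots hz
    have hz0 : z ≠ 0 := by
      rintro rfl
      exact hP0 (zero_isRoot_iff_coeff_zero_eq_zero.mp hPz)
    rw [IsRoot, eval_laurentNumerator r n a hz0] at hPz
    exact hzeros z hz0 ((mul_eq_zero.mp hPz).resolve_left (pow_ne_zero _ hz0))
  obtain ⟨μ, hμ, hPμ⟩ := isSelfInversive_of_norm_roots_eq_one (fun h => hP0 (by simp [h])) hroots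
  have hμ_exp : exp (arg μ * I) = μ := by simpa [hμ] using norm_mul_exp_arg_mul_I μ
  have hdeg : P.natDegree = n + r := natDegree_laurentNumerator a r n han
  refine ⟨arg μ, fun k hr hn => ?_⟩
  have hdual : P.natDegree - (k + r).toNat = (n - r - k + r).toNat := by omega
  calc a k = P.coeff (k + r).toNat := (coeff_laurentNumerator_toNat a r n hr hn).symm
    _ = μ * conj (P.coeff (n - r - k + r).toNat) := by
      rw [coeff_eq_mul_conj_coeff_natDegree_sub hPμ (by omega), hdual]
    _ = exp (arg μ * I) * conj (a (n - r - k)) := by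
      rw [coeff_laurentNumerator_toNat a r n (by omega) (by omega), hμ_exp]
end

section
/- A binary signature g with values g₀₀, g₀₁, g₁₀, g₁₁ ∈ ℂ, all nonzero, is affine if and only if there exist a nonzero λ ∈ ℂ and natural numbers a,b,c,d with g's matrix equal to λ·[[i^a, i^b],[i^c, i^d]] and a + b + c + d ≡ 0 (mod 2). -/
/-- Boolean to `ZMod 2`. -/
def bz2 (x : Bool) : ZMod 2 := if x then 1 else 0

/-- Boolean to `ZMod 4`. -/
def bz4 (x : Bool) : ZMod 4 := if x then 1 else 0

/-- A signature `f : {0,1}ⁿ → ℂ` is affine if it has the form `λ · χ_{AX=0} · i^{Q(X)}`,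
where `X = (x₁,…,xₙ,1)`, `A` is a matrix over `ℤ₂`, and `Q` is a quadratic multilinear
polynomial over `ℤ₄` whose cross terms all have even coefficients. -/
def IsAffine {n : ℕ} (f : (Fin n → Bool) → ℂ) : Prop :=
  ∃ (l : ℂ) (m : ℕ) (A : Matrix (Fin m) (Fin (n + 1)) (ZMod 2))
    (a0 : ZMod 4) (a : Fin n → ZMod 4) (bc : Fin n → Fin n → ZMod 4),
    ∀ x : Fin n → Bool,
      f x = l * (if A.mulVec (Fin.snoc (fun i => bz2 (x i)) 1) = 0 then 1 else 0) *
        Complex.I ^ (a0 + (∑ i, a i * bz4 (x i)) +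
          ∑ i : Fin n, ∑ j : Fin n, (if (i : ℕ) < (j : ℕ) then 2 * bc i j * (bz4 (x i) * bz4 (x j)) else 0)).val

lemma bz4_false : bz4 false = 0 := rfl
lemma bz4_true : bz4 true = 1 := rfl

lemma ipow_mod (n : ℕ) : Complex.I ^ (n % 4) = Complex.I ^ n := by
  conv_rhs => rw [← Nat.div_add_mod n 4]
  rw [pow_add, pow_mul, Complex.I_pow_four, one_pow, one_mul]

lemma ipow_val (n : ℕ) : Complex.I ^ ((n : ZMod 4)).val = Complex.I ^ n := by
  rw [ZMod.val_natCast]; exact ipow_mod n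

lemma parity_lemma : ∀ w x y z : ZMod 4, (∃ t, w + x + y + z = 2 * t) →
    (w.val + x.val + y.val + z.val) % 2 = 0 := by decide

lemma half_of : ∀ u : ZMod 4,
    ZMod.castHom (show (2:ℕ) ∣ 4 by norm_num) (ZMod 2) u = 0 → ∃ t : ZMod 4, u = 2 * t := by
  decide

/-- A binary signature `g` with all four values nonzero is affine iff its matrix is
`λ·[[i^a, i^b],[i^c, i^d]]` with `λ ≠ 0` and `a + b + c + d ≡ 0 (mod 2)`. -/
theorem binary_affine_iff (g : Bool → Bool → ℂ) (hg : ∀ x y, g x y ≠ 0) :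
    IsAffine (fun x : Fin 2 → Bool => g (x 0) (x 1)) ↔
      ∃ (l : ℂ) (a b c d : ℕ), l ≠ 0 ∧
        g false false = l * Complex.I ^ a ∧ g false true = l * Complex.I ^ b ∧
        g true false = l * Complex.I ^ c ∧ g true true = l * Complex.I ^ d ∧
        (a + b + c + d) % 2 = 0 := by
  constructor
  · rintro ⟨l, m, A, a0, a, bc, key⟩
    have key' : ∀ u v : Bool, g u v = l *
        (if A.mulVec (Fin.snoc (fun i => bz2 (![u, v] i)) 1) = 0 then 1 else 0) *
        Complex.I ^ (a0 + (a 0 * bz4 u + a 1 * bz4 v) + 2 * bc 0 1 * (bz4 u * bz4 v)).val := by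
      intro u v
      have h := key ![u, v]
      simpa [Fin.sum_univ_two] using h
    have key'' : ∀ u v : Bool,
        g u v = l * Complex.I ^ (a0 + (a 0 * bz4 u + a 1 * bz4 v) + 2 * bc 0 1 * (bz4 u * bz4 v)).val := by
      intro u v
      have h := key' u v
      split_ifs at h with hc
      · simpa using h
      · exfalso; exact hg u v (by simpa using h)
    refine ⟨l, (a0 : ZMod 4).val, (a0 + a 1 : ZMod 4).val, (a0 + a 0 : ZMod 4).val,
      (a0 + (a 0 + a 1) + 2 * bc 0 1 : ZMod 4).val, ?_, ?_, ?_, ?_, ?_, ?_⟩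
    · intro hl
      have h := key'' false false
      rw [hl, zero_mul] at h
      exact hg false false h
    · have h := key'' false false
      simpa only [bz4_false, mul_zero, zero_mul, add_zero] using h
    · have h := key'' false true
      simpa only [bz4_false, bz4_true, mul_zero, zero_mul, mul_one, one_mul, add_zero, zero_add] using h
    · have h := key'' true false
      simpa only [bz4_false, bz4_true, mul_zero, zero_mul, mul_one, one_mul, add_zero, zero_add] using h
    · have h := key'' true true
      simpa only [bz4_true, mul_one, one_mul] using h
    · exact parity_lemma _ _ _ _ ⟨a 0 + a 1 + bc 0 1 + 2 * a0, by ring⟩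
  · rintro ⟨l, a, b, c, d, hl, h00, h01, h10, h11, hpar⟩
    obtain ⟨t, ht⟩ : ∃ t : ZMod 4, (a : ZMod 4) + d - b - c = 2 * t := by
      apply half_of
      have two0 : (2 : ZMod 2) = 0 := rfl
      have hsum : (((a + b + c + d : ℕ)) : ZMod 2) = 0 :=
        (ZMod.natCast_eq_zero_iff _ _).mpr (Nat.dvd_of_mod_eq_zero hpar)
      push_cast at hsum
      rw [map_sub, map_sub, map_add, map_natCast, map_natCast, map_natCast, map_natCast]
      linear_combination hsum + (-(b : ZMod 2) - c) * two0
    refine ⟨l, 0, 0, (a : ZMod 4), ![(c : ZMod 4) - a, (b : ZMod 4) - a], fun _ _ => t, ?_⟩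
    intro x
    have hind : ((0 : Matrix (Fin 0) (Fin 3) (ZMod 2)).mulVec
        (Fin.snoc (fun i => bz2 (x i)) 1) = 0) := Subsingleton.elim _ _
    rw [if_pos hind, mul_one]
    cases hx0 : x 0 <;> cases hx1 : x 1 <;>
      simp only [hx0, hx1, bz4_false, bz4_true, Fin.sum_univ_two, Matrix.cons_val_zero,
        Matrix.cons_val_one, Matrix.head_cons, mul_zero, zero_mul, mul_one, one_mul,
        add_zero, zero_add, Fin.isValue, Fin.val_zero, Fin.val_one]
    · refine ((by rw [ipow_val]; exact h00 : g false false = l * Complex.I ^ ((a : ZMod 4)).val)).trans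
        (congrArg (fun q : ZMod 4 => l * Complex.I ^ q.val) ?_)
      norm_num
    · refine ((by rw [ipow_val]; exact h01 : g false true = l * Complex.I ^ ((b : ZMod 4)).val)).trans
        (congrArg (fun q : ZMod 4 => l * Complex.I ^ q.val) ?_)
      norm_num
    · refine ((by rw [ipow_val]; exact h10 : g true false = l * Complex.I ^ ((c : ZMod 4)).val)).trans
        (congrArg (fun q : ZMod 4 => l * Complex.I ^ q.val) ?_)
      norm_num
    · refine ((by rw [ipow_val]; exact h11 : g true true = l * Complex.I ^ ((d : ZMod 4)).val)).trans
        (congrArg (fun q : ZMod 4 => l * Complex.I ^ q.val) ?_)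
      norm_num
      linear_combination ht
end
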